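/- arXiv:2508.03994 — 2 statements merged into one kernel-verified Lean document; each statement's English description precedes it below -/
import Mathlib

section
/- Stability of the thermal channel for general input states (limits of optimizers are optimizers): Let φ^z, for z ∈ (0,∞), be density matrices on ℂ^{d_R} converging to a density matrix φ as z → 0⁺. For each z let T^z be a feasible Choi matrix maximizing S_{φ^z} over feasible Choi matrices, and suppose the T^z converge to a matrix T as z → 0⁺. Then T is a feasible Choi matrix and T maximizes S_φ over feasible Choi matrices. -/
/-! Statement 7: Stability of the thermal channel for general input states (limits of optimizers are optimizers). -/

noncomputable section
open scoped Kronecker ComplexOrder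
open Matrix

namespace ThermalPaper

/-- Functional calculus for Hermitian matrices (junk value `0` on non-Hermitian input). -/
def hermCFC {n : Type*} [Fintype n] [DecidableEq n] (f : ℝ → ℝ)
    (A : Matrix n n ℂ) : Matrix n n ℂ :=
  if hA : A.IsHermitian then
    (hA.eigenvectorUnitary : Matrix n n ℂ) *
      Matrix.diagonal (fun i => (f (hA.eigenvalues i) : ℂ)) *
      star (hA.eigenvectorUnitary : Matrix n n ℂ)
  else 0

/-- Matrix logarithm of a Hermitian matrix, with the convention `log 0 = 0`. -/
def matLog {n : Type*} [Fintype n] [DecidableEq n] (A : Matrix n n ℂ) : Matrix n n ℂ :=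
  hermCFC Real.log A

/-- Positive semidefinite square root of a positive semidefinite matrix. -/
def matSqrt {n : Type*} [Fintype n] [DecidableEq n] (A : Matrix n n ℂ) : Matrix n n ℂ :=
  hermCFC Real.sqrt A

/-- `X^{-1/2}`: the PSD square root of the Moore–Penrose pseudoinverse of `X`. -/
def matPinvSqrt {n : Type*} [Fintype n] [DecidableEq n] (A : Matrix n n ℂ) : Matrix n n ℂ :=
  hermCFC (fun x => Real.sqrt x⁻¹) A

/-- `Π^X`: orthogonal projection onto the range (support) of a PSD matrix `X`. -/
def suppProj {n : Type*} [Fintype n] [DecidableEq n] (A : Matrix n n ℂ) : Matrix n n ℂ :=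
  hermCFC (fun x => if x = 0 then 0 else 1) A

/-- Von Neumann entropy `S(X) = −tr(X log X)`. -/
def vnEnt {n : Type*} [Fintype n] [DecidableEq n] (A : Matrix n n ℂ) : ℝ :=
  -(Matrix.trace (A * matLog A)).re

/-- A density matrix: positive semidefinite with unit trace. -/
def IsDensity {n : Type*} [Fintype n] [DecidableEq n] (ρ : Matrix n n ℂ) : Prop :=
  ρ.PosSemidef ∧ Matrix.trace ρ = 1

variable {dB dR : ℕ}

/-- Partial trace over the `B` factor. -/
def ptraceB (N : Matrix (Fin dB × Fin dR) (Fin dB × Fin dR) ℂ) :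
    Matrix (Fin dR) (Fin dR) ℂ :=
  Matrix.of fun r r' => ∑ b : Fin dB, N (b, r) (b, r')

/-- A Choi matrix: positive semidefinite with `tr_B N = 1`. -/
def IsChoi (N : Matrix (Fin dB × Fin dR) (Fin dB × Fin dR) ℂ) : Prop :=
  N.PosSemidef ∧ ptraceB N = 1

/-- Channel conditional entropy `S_ρ(N)` with respect to the input state `ρ`. -/
def condEnt (ρ : Matrix (Fin dR) (Fin dR) ℂ)
    (N : Matrix (Fin dB × Fin dR) (Fin dB × Fin dR) ℂ) : ℝ :=
  vnEnt (((1 : Matrix (Fin dB) (Fin dB) ℂ) ⊗ₖ matSqrt ρ) * N *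
    ((1 : Matrix (Fin dB) (Fin dB) ℂ) ⊗ₖ matSqrt ρ)) - vnEnt ρ

/-- Channel entropy: the infimum of `S_ρ(N)` over density matrices `ρ`. -/
def chanEnt (N : Matrix (Fin dB × Fin dR) (Fin dB × Fin dR) ℂ) : ℝ :=
  sInf {x : ℝ | ∃ ρ : Matrix (Fin dR) (Fin dR) ℂ, IsDensity ρ ∧ condEnt ρ N = x}

/-! ### Auxiliary lemmas for the stability proof -/

section AuxCFC

open Polynomial Filter

variable {n : Type*} [Fintype n] [DecidableEq n] {A : Matrix n n ℂ}

lemma hermCFC_of (hA : A.IsHermitian) (f : ℝ → ℝ) :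
    hermCFC f A = (hA.eigenvectorUnitary : Matrix n n ℂ) *
      Matrix.diagonal (fun i => (f (hA.eigenvalues i) : ℂ)) *
      star (hA.eigenvectorUnitary : Matrix n n ℂ) := dif_pos hA

lemma U_mul_star (hA : A.IsHermitian) :
    (hA.eigenvectorUnitary : Matrix n n ℂ) * star (hA.eigenvectorUnitary : Matrix n n ℂ) = 1 :=
  (Matrix.mem_unitaryGroup_iff).mp (hA.eigenvectorUnitary).2

lemma star_mul_U (hA : A.IsHermitian) :
    star (hA.eigenvectorUnitary : Matrix n n ℂ) * (hA.eigenvectorUnitary : Matrix n n ℂ) = 1 :=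
  (Matrix.mem_unitaryGroup_iff').mp (hA.eigenvectorUnitary).2

private lemma mul_mul_mul_assoc' {a b c d e f : Matrix n n ℂ} :
    (a * b * c) * (d * e * f) = a * (b * (c * d) * e) * f := by
  simp only [mul_assoc]

lemma hermCFC_isHermitian (hA : A.IsHermitian) (f : ℝ → ℝ) :
    (hermCFC f A).IsHermitian := by
  rw [hermCFC_of hA]
  have hD : (Matrix.diagonal (fun i => (f (hA.eigenvalues i) : ℂ)))ᴴ
      = Matrix.diagonal (fun i => (f (hA.eigenvalues i) : ℂ)) := by
    ext i j
    rcases eq_or_ne i j with rfl | hij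
    · simp [Matrix.conjTranspose_apply, Complex.conj_ofReal]
    · simp [Matrix.conjTranspose_apply, Matrix.diagonal_apply_ne _ hij,
        Matrix.diagonal_apply_ne _ (Ne.symm hij)]
  show _ᴴ = _
  rw [Matrix.conjTranspose_mul, Matrix.conjTranspose_mul, hD,
    ← Matrix.star_eq_conjTranspose, ← Matrix.star_eq_conjTranspose, star_star, mul_assoc]

lemma hermCFC_mul (hA : A.IsHermitian) (f g : ℝ → ℝ) :
    hermCFC f A * hermCFC g A = hermCFC (fun x => f x * g x) A := by
  rw [hermCFC_of hA f, hermCFC_of hA g, hermCFC_of hA (fun x => f x * g x),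
    mul_mul_mul_assoc', star_mul_U hA, mul_one, Matrix.diagonal_mul_diagonal]
  congr 1
  congr 1
  funext i
  push_cast
  ring

lemma hermCFC_add (hA : A.IsHermitian) (f g : ℝ → ℝ) :
    hermCFC f A + hermCFC g A = hermCFC (fun x => f x + g x) A := by
  rw [hermCFC_of hA f, hermCFC_of hA g, hermCFC_of hA (fun x => f x + g x),
    ← add_mul, ← Matrix.mul_add, Matrix.diagonal_add]
  congr 2
  funext i
  push_cast
  ring

lemma hermCFC_sub (hA : A.IsHermitian) (f g : ℝ → ℝ) :
    hermCFC f A - hermCFC g A = hermCFC (fun x => f x - g x) A := by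
  rw [hermCFC_of hA f, hermCFC_of hA g, hermCFC_of hA (fun x => f x - g x),
    ← sub_mul, ← Matrix.mul_sub, Matrix.diagonal_sub]
  congr 2
  funext i
  push_cast
  ring

lemma trace_hermCFC (hA : A.IsHermitian) (f : ℝ → ℝ) :
    Matrix.trace (hermCFC f A) = ∑ i, (f (hA.eigenvalues i) : ℂ) := by
  rw [hermCFC_of hA, Matrix.trace_mul_comm, ← mul_assoc, star_mul_U hA, one_mul,
    Matrix.trace_diagonal]

lemma hermCFC_id (hA : A.IsHermitian) : hermCFC (fun x => x) A = A := by
  rw [hermCFC_of hA]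
  conv_rhs => rw [hA.spectral_theorem]
  rfl

lemma conj_pow (hA : A.IsHermitian) (d : n → ℂ) (k : ℕ) :
    ((hA.eigenvectorUnitary : Matrix n n ℂ) * Matrix.diagonal d *
      star (hA.eigenvectorUnitary : Matrix n n ℂ)) ^ k
    = (hA.eigenvectorUnitary : Matrix n n ℂ) * (Matrix.diagonal d) ^ k *
      star (hA.eigenvectorUnitary : Matrix n n ℂ) := by
  induction k with
  | zero => simp [U_mul_star hA]
  | succ k ih =>
      rw [pow_succ, ih, pow_succ, mul_mul_mul_assoc', star_mul_U hA, mul_one]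

lemma aeval_eq_hermCFC (hA : A.IsHermitian) (p : ℝ[X]) :
    Polynomial.aeval A p = hermCFC (fun x => p.eval x) A := by
  induction p using Polynomial.induction_on' with
  | add p q hp hq =>
      rw [map_add, hp, hq, hermCFC_add hA]
      congr 1
      funext x
      simp [Polynomial.eval_add]
  | monomial k a =>
      rw [Polynomial.aeval_monomial, hermCFC_of hA]
      have hsp : A ^ k = (hA.eigenvectorUnitary : Matrix n n ℂ) *
          (Matrix.diagonal (fun i => (hA.eigenvalues i : ℂ))) ^ k *
          star (hA.eigenvectorUnitary : Matrix n n ℂ) := by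
        conv_lhs => rw [hA.spectral_theorem]
        exact conj_pow hA _ k
      have hdiag : a • (Matrix.diagonal fun i => (hA.eigenvalues i : ℂ)) ^ k
          = Matrix.diagonal fun i =>
              (((Polynomial.monomial k a).eval (hA.eigenvalues i) : ℝ) : ℂ) := by
        rw [Matrix.diagonal_pow, ← Matrix.diagonal_smul]
        refine (Matrix.diagonal_eq_diagonal_iff).mpr fun i => ?_
        simp only [Pi.smul_apply, Pi.pow_apply, Polynomial.eval_monomial, Complex.real_smul]
        push_cast
        ring
      rw [hsp, Algebra.algebraMap_eq_smul_one, smul_mul_assoc, one_mul, ← smul_mul_assoc,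
        ← mul_smul_comm, hdiag]

/-- Squared Frobenius norm. -/
def frobSq (A : Matrix n n ℂ) : ℝ := ∑ i, ∑ j, Complex.normSq (A i j)

lemma frobSq_nonneg (A : Matrix n n ℂ) : 0 ≤ frobSq A :=
  Finset.sum_nonneg fun _ _ => Finset.sum_nonneg fun _ _ => Complex.normSq_nonneg _

lemma continuous_frobSq : Continuous (frobSq : Matrix n n ℂ → ℝ) := by
  refine continuous_finset_sum _ fun i _ => continuous_finset_sum _ fun j _ => ?_
  exact Complex.continuous_normSq.comp (continuous_id.matrix_elem i j)

lemma frobSq_eq_trace (A : Matrix n n ℂ) : frobSq A = (Matrix.trace (Aᴴ * A)).re := by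
  rw [Matrix.trace]
  simp only [Matrix.diag_apply, Matrix.mul_apply, Matrix.conjTranspose_apply, Complex.re_sum]
  rw [frobSq, Finset.sum_comm]
  refine Finset.sum_congr rfl fun j _ => Finset.sum_congr rfl fun i _ => ?_
  simp only [Complex.normSq_apply, Complex.mul_re, Complex.star_def, Complex.conj_re,
    Complex.conj_im]
  ring

lemma normSq_entry_le_frobSq (A : Matrix n n ℂ) (i j : n) :
    Complex.normSq (A i j) ≤ frobSq A := by
  have h1 : Complex.normSq (A i j) ≤ ∑ j', Complex.normSq (A i j') :=
    Finset.single_le_sum (fun _ _ => Complex.normSq_nonneg _) (Finset.mem_univ j)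
  exact h1.trans (Finset.single_le_sum
    (fun i' (_ : i' ∈ Finset.univ) => Finset.sum_nonneg fun _ _ => Complex.normSq_nonneg _)
    (Finset.mem_univ i))

lemma frobSq_eq_sum_sq (hA : A.IsHermitian) :
    frobSq A = ∑ i, hA.eigenvalues i ^ 2 := by
  have h1 : Aᴴ * A = hermCFC (fun x => x * x) A := by
    rw [hA.eq]
    conv_lhs => rw [← hermCFC_id hA]
    exact hermCFC_mul hA _ _
  rw [frobSq_eq_trace, h1, trace_hermCFC hA]
  rw [Complex.re_sum]
  congr 1
  funext i
  simp [sq]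

lemma eigenvalue_sq_le (hA : A.IsHermitian) (i : n) :
    hA.eigenvalues i ^ 2 ≤ frobSq A := by
  rw [frobSq_eq_sum_sq hA]
  exact Finset.single_le_sum (f := fun j => hA.eigenvalues j ^ 2)
    (fun j _ => sq_nonneg _) (Finset.mem_univ i)

lemma hermCFC_entry_le (hA : A.IsHermitian) {g : ℝ → ℝ} {δ : ℝ} (hδ : 0 ≤ δ)
    (hg : ∀ i, |g (hA.eigenvalues i)| ≤ δ) (i j : n) :
    ‖hermCFC g A i j‖ ≤ Real.sqrt (Fintype.card n) * δ := by
  have hH := hermCFC_isHermitian hA g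
  have h1 : frobSq (hermCFC g A) = ∑ k, g (hA.eigenvalues k) ^ 2 := by
    rw [frobSq_eq_trace, hH.eq, hermCFC_mul hA, trace_hermCFC hA, Complex.re_sum]
    congr 1
    funext k
    simp [sq]
  have h2 : frobSq (hermCFC g A) ≤ (Fintype.card n : ℝ) * δ ^ 2 := by
    rw [h1]
    calc (∑ k, g (hA.eigenvalues k) ^ 2) ≤ ∑ _k : n, δ ^ 2 := by
          refine Finset.sum_le_sum fun k _ => ?_
          rw [← sq_abs]
          exact pow_le_pow_left₀ (abs_nonneg _) (hg k) 2
      _ = (Fintype.card n : ℝ) * δ ^ 2 := by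
          rw [Finset.sum_const, Finset.card_univ, nsmul_eq_mul]
  calc ‖hermCFC g A i j‖ = Real.sqrt (Complex.normSq (hermCFC g A i j)) :=
        Complex.norm_def _
    _ ≤ Real.sqrt ((Fintype.card n : ℝ) * δ ^ 2) :=
        Real.sqrt_le_sqrt ((normSq_entry_le_frobSq _ i j).trans h2)
    _ = Real.sqrt (Fintype.card n) * δ := by
        rw [Real.sqrt_mul (Nat.cast_nonneg _), Real.sqrt_sq hδ]

lemma exists_poly_approx (f : ℝ → ℝ) (hf : Continuous f) (M δ : ℝ) (hδ : 0 < δ) :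
    ∃ p : ℝ[X], ∀ x ∈ Set.Icc (-M) M, |f x - p.eval x| ≤ δ := by
  obtain ⟨p, hp⟩ := exists_polynomial_near_continuousMap (-M) M
    (ContinuousMap.restrict _ ⟨f, hf⟩) δ hδ
  refine ⟨p, fun x hx => ?_⟩
  have h1 := ContinuousMap.norm_coe_le_norm
    (p.toContinuousMapOn (Set.Icc (-M) M) - ContinuousMap.restrict _ ⟨f, hf⟩) ⟨x, hx⟩
  have h2 : (p.toContinuousMapOn (Set.Icc (-M) M) -
      ContinuousMap.restrict (Set.Icc (-M) M) ⟨f, hf⟩) ⟨x, hx⟩ = p.eval x - f x := by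
    simp [Polynomial.toContinuousMapOn, Polynomial.toContinuousMap]
  rw [h2] at h1
  have : |p.eval x - f x| ≤ δ := le_of_lt (lt_of_le_of_lt (by simpa using h1) hp)
  rwa [abs_sub_comm] at this

lemma tendsto_hermCFC {α : Type*} {l : Filter α} {A : α → Matrix n n ℂ} {L : Matrix n n ℂ}
    {f : ℝ → ℝ} (hf : Continuous f) (hL : L.IsHermitian)
    (hA : ∀ᶠ x in l, (A x).IsHermitian) (h : Filter.Tendsto A l (nhds L)) :
    Filter.Tendsto (fun x => hermCFC f (A x)) l (nhds (hermCFC f L)) := by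
  refine tendsto_pi_nhds.mpr ?_
  intro i
  rw [tendsto_pi_nhds]
  intro j
  rw [Metric.tendsto_nhds]
  intro ε hε
  set c := Real.sqrt (Fintype.card n) with hc
  have hc0 : (0:ℝ) ≤ c := Real.sqrt_nonneg _
  set M : ℝ := Real.sqrt (frobSq L) + 1 with hM
  have hM0 : 0 < M := by positivity
  set δ := ε / (3 * (c + 1)) with hδdef
  have hδ : 0 < δ := by positivity
  obtain ⟨p, hp⟩ := exists_poly_approx f hf M δ hδ
  have hLbound : ∀ k, |hL.eigenvalues k| ≤ M := by
    intro k
    calc |hL.eigenvalues k| = Real.sqrt (hL.eigenvalues k ^ 2) := (Real.sqrt_sq_eq_abs _).symm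
      _ ≤ Real.sqrt (frobSq L) := Real.sqrt_le_sqrt (eigenvalue_sq_le hL k)
      _ ≤ M := by rw [hM]; linarith
  have hflim : Filter.Tendsto (fun x => frobSq (A x)) l (nhds (frobSq L)) :=
    (continuous_frobSq.tendsto L).comp h
  have hev1 : ∀ᶠ x in l, frobSq (A x) < M ^ 2 := by
    refine hflim.eventually_lt_const ?_
    have h1 : frobSq L = Real.sqrt (frobSq L) ^ 2 := (Real.sq_sqrt (frobSq_nonneg L)).symm
    rw [h1, hM]
    have := Real.sqrt_nonneg (frobSq L)
    nlinarith
  have hcont : Continuous (fun X : Matrix n n ℂ => (Polynomial.aeval X p : Matrix n n ℂ) i j) :=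
    (p.continuous_aeval).matrix_elem i j
  have hev2 : ∀ᶠ x in l, dist ((Polynomial.aeval (A x) p : Matrix n n ℂ) i j)
      ((Polynomial.aeval L p : Matrix n n ℂ) i j) < ε / 3 :=
    Metric.tendsto_nhds.mp ((hcont.tendsto L).comp h) (ε/3) (by positivity)
  have key : ∀ (B : Matrix n n ℂ) (hB : B.IsHermitian), (∀ k, |hB.eigenvalues k| ≤ M) →
      ‖(hermCFC f B - Polynomial.aeval B p) i j‖ ≤ c * δ := by
    intro B hB hBb
    have hEq : hermCFC f B - Polynomial.aeval B p = hermCFC (fun t => f t - p.eval t) B := by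
      rw [aeval_eq_hermCFC hB, hermCFC_sub hB]
    rw [hEq]
    exact hermCFC_entry_le hB hδ.le
      (fun k => hp _ (Set.mem_Icc.mpr (abs_le.mp (hBb k)))) i j
  filter_upwards [hA, hev1, hev2] with x hAx hb hd
  have hAxbound : ∀ k, |hAx.eigenvalues k| ≤ M := by
    intro k
    calc |hAx.eigenvalues k| = Real.sqrt (hAx.eigenvalues k ^ 2) := (Real.sqrt_sq_eq_abs _).symm
      _ ≤ Real.sqrt (frobSq (A x)) := Real.sqrt_le_sqrt (eigenvalue_sq_le hAx k)
      _ ≤ Real.sqrt (M ^ 2) := Real.sqrt_le_sqrt hb.le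
      _ = M := Real.sqrt_sq hM0.le
  have t1 := key (A x) hAx hAxbound
  have t2 := key L hL hLbound
  rw [Complex.dist_eq]
  have decomp : hermCFC f (A x) i j - hermCFC f L i j =
      ((hermCFC f (A x) - Polynomial.aeval (A x) p) i j)
      + ((Polynomial.aeval (A x) p : Matrix n n ℂ) i j - (Polynomial.aeval L p : Matrix n n ℂ) i j)
      + (-((hermCFC f L - Polynomial.aeval L p) i j)) := by
    simp only [Matrix.sub_apply]
    ring
  rw [decomp]
  have tri : ‖((hermCFC f (A x) - Polynomial.aeval (A x) p) i j)
      + ((Polynomial.aeval (A x) p : Matrix n n ℂ) i j - (Polynomial.aeval L p : Matrix n n ℂ) i j)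
      + (-((hermCFC f L - Polynomial.aeval L p) i j))‖
      ≤ ‖(hermCFC f (A x) - Polynomial.aeval (A x) p) i j‖
      + ‖(Polynomial.aeval (A x) p : Matrix n n ℂ) i j
          - (Polynomial.aeval L p : Matrix n n ℂ) i j‖
      + ‖-((hermCFC f L - Polynomial.aeval L p) i j)‖ :=
    le_trans (norm_add_le _ _) (by gcongr; exact norm_add_le _ _)
  rw [norm_neg] at tri
  have hd' : ‖(Polynomial.aeval (A x) p : Matrix n n ℂ) i j
      - (Polynomial.aeval L p : Matrix n n ℂ) i j‖ < ε / 3 := by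
    rwa [Complex.dist_eq] at hd
  have hcδ : c * δ < ε / 3 := by
    have h1 : (c + 1) * δ = ε / 3 := by
      rw [hδdef]; field_simp
    nlinarith
  calc ‖_‖ ≤ _ := tri
    _ < ε / 3 + ε / 3 + ε / 3 := by linarith [t1, t2, hd', hcδ]
    _ = ε := by ring

lemma mul_matLog_eq (hA : A.IsHermitian) :
    A * matLog A = hermCFC (fun t => t * Real.log t) A := by
  rw [matLog]
  nth_rewrite 1 [← hermCFC_id hA]
  rw [hermCFC_mul hA]

lemma vnEnt_eq (hA : A.IsHermitian) :
    vnEnt A = -(Matrix.trace (hermCFC (fun t => t * Real.log t) A)).re := by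
  rw [vnEnt, mul_matLog_eq hA]

lemma tendsto_vnEnt {α : Type*} {l : Filter α} {A : α → Matrix n n ℂ} {L : Matrix n n ℂ}
    (hL : L.IsHermitian) (hA : ∀ᶠ x in l, (A x).IsHermitian)
    (h : Filter.Tendsto A l (nhds L)) :
    Filter.Tendsto (fun x => vnEnt (A x)) l (nhds (vnEnt L)) := by
  have h1 : Filter.Tendsto (fun x => hermCFC (fun t => t * Real.log t) (A x)) l
      (nhds (hermCFC (fun t => t * Real.log t) L)) :=
    tendsto_hermCFC Real.continuous_mul_log hL hA h
  have h2 : Continuous fun X : Matrix n n ℂ => -(Matrix.trace X).re :=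
    (Complex.continuous_re.comp (continuous_id.matrix_trace)).neg
  have h3 := (h2.tendsto _).comp h1
  rw [← vnEnt_eq hL] at h3
  refine h3.congr' ?_
  filter_upwards [hA] with x hx
  exact (vnEnt_eq hx).symm

end AuxCFC

section AuxCond

open Filter

variable {dB dR : ℕ}

lemma kron_one_herm {S : Matrix (Fin dR) (Fin dR) ℂ} (hS : S.IsHermitian) :
    ((1 : Matrix (Fin dB) (Fin dB) ℂ) ⊗ₖ S).IsHermitian := by
  show _ᴴ = _
  ext ⟨b, r⟩ ⟨b', r'⟩
  simp only [Matrix.conjTranspose_apply, Matrix.kroneckerMap_apply]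
  rw [star_mul']
  have h1 : star ((1 : Matrix (Fin dB) (Fin dB) ℂ) b' b)
      = (1 : Matrix (Fin dB) (Fin dB) ℂ) b b' := by
    by_cases hbb : b = b' <;> simp [Matrix.one_apply, hbb, eq_comm]
  have h2 : star (S r' r) = S r r' := by
    conv_rhs => rw [← hS.eq]
    simp [Matrix.conjTranspose_apply]
  rw [h1, h2]

lemma continuous_kron_one :
    Continuous (fun S : Matrix (Fin dR) (Fin dR) ℂ =>
      (1 : Matrix (Fin dB) (Fin dB) ℂ) ⊗ₖ S) := by
  refine continuous_matrix fun ⟨b, r⟩ ⟨b', r'⟩ => ?_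
  simp only [Matrix.kroneckerMap_apply]
  exact continuous_const.mul (continuous_id.matrix_elem r r')

lemma sandwich_herm {K N : Matrix (Fin dB × Fin dR) (Fin dB × Fin dR) ℂ}
    (hK : K.IsHermitian) (hN : N.IsHermitian) : (K * N * K).IsHermitian := by
  show _ᴴ = _
  rw [Matrix.conjTranspose_mul, Matrix.conjTranspose_mul, hK.eq, hN.eq, mul_assoc]

lemma tendsto_condEnt {α : Type*} {l : Filter α}
    {ρz : α → Matrix (Fin dR) (Fin dR) ℂ} {ρ : Matrix (Fin dR) (Fin dR) ℂ}
    {Nz : α → Matrix (Fin dB × Fin dR) (Fin dB × Fin dR) ℂ}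
    {L : Matrix (Fin dB × Fin dR) (Fin dB × Fin dR) ℂ}
    (hρz : ∀ᶠ x in l, (ρz x).PosSemidef) (hρ : ρ.PosSemidef)
    (hNz : ∀ᶠ x in l, (Nz x).IsHermitian) (hL : L.IsHermitian)
    (h1 : Filter.Tendsto ρz l (nhds ρ)) (h2 : Filter.Tendsto Nz l (nhds L)) :
    Filter.Tendsto (fun x => condEnt (ρz x) (Nz x)) l (nhds (condEnt ρ L)) := by
  have hρherm : ∀ᶠ x in l, (ρz x).IsHermitian := hρz.mono fun x hx => hx.1
  have hsq : Filter.Tendsto (fun x => matSqrt (ρz x)) l (nhds (matSqrt ρ)) :=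
    tendsto_hermCFC Real.continuous_sqrt hρ.1 hρherm h1
  have hK : Filter.Tendsto (fun x => (1 : Matrix (Fin dB) (Fin dB) ℂ) ⊗ₖ matSqrt (ρz x)) l
      (nhds ((1 : Matrix (Fin dB) (Fin dB) ℂ) ⊗ₖ matSqrt ρ)) :=
    ((continuous_kron_one (dB := dB) (dR := dR)).tendsto _).comp hsq
  have hprod : Filter.Tendsto
      (fun x => ((1 : Matrix (Fin dB) (Fin dB) ℂ) ⊗ₖ matSqrt (ρz x)) * Nz x *
        ((1 : Matrix (Fin dB) (Fin dB) ℂ) ⊗ₖ matSqrt (ρz x))) l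
      (nhds (((1 : Matrix (Fin dB) (Fin dB) ℂ) ⊗ₖ matSqrt ρ) * L *
        ((1 : Matrix (Fin dB) (Fin dB) ℂ) ⊗ₖ matSqrt ρ))) :=
    (hK.mul h2).mul hK
  have hherm : ∀ᶠ x in l,
      (((1 : Matrix (Fin dB) (Fin dB) ℂ) ⊗ₖ matSqrt (ρz x)) * Nz x *
        ((1 : Matrix (Fin dB) (Fin dB) ℂ) ⊗ₖ matSqrt (ρz x))).IsHermitian := by
    filter_upwards [hρherm, hNz] with x hx hNx
    exact sandwich_herm (kron_one_herm (hermCFC_isHermitian hx _)) hNx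
  have hLherm : (((1 : Matrix (Fin dB) (Fin dB) ℂ) ⊗ₖ matSqrt ρ) * L *
      ((1 : Matrix (Fin dB) (Fin dB) ℂ) ⊗ₖ matSqrt ρ)).IsHermitian :=
    sandwich_herm (kron_one_herm (hermCFC_isHermitian hρ.1 _)) hL
  have e1 := tendsto_vnEnt hLherm hherm hprod
  have e2 := tendsto_vnEnt hρ.1 hρherm h1
  simpa only [condEnt] using e1.sub e2

end AuxCond


/-- **Limits of thermal channels with respect to converging input states are thermal channels.** -/
theorem thermal_channel_limit_stability
    {dB dR J : ℕ} (hdB : 1 ≤ dB) (hdR : 1 ≤ dR)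
    (C : Fin J → Matrix (Fin dB × Fin dR) (Fin dB × Fin dR) ℂ)
    (hC : ∀ j, (C j).IsHermitian) (q : Fin J → ℝ)
    -- a family of density matrices converging to a density matrix `φ` as `z → 0⁺`
    (φz : ℝ → Matrix (Fin dR) (Fin dR) ℂ) (φ : Matrix (Fin dR) (Fin dR) ℂ)
    (hφz : ∀ z ∈ Set.Ioi (0 : ℝ), IsDensity (φz z)) (hφ : IsDensity φ)
    (hφlim : Filter.Tendsto φz (nhdsWithin 0 (Set.Ioi 0)) (nhds φ))
    -- for each `z`, a feasible Choi matrix maximizing `S_{φ^z}` over feasible Choi matrices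
    (Tz : ℝ → Matrix (Fin dB × Fin dR) (Fin dB × Fin dR) ℂ)
    (T : Matrix (Fin dB × Fin dR) (Fin dB × Fin dR) ℂ)
    (hTz : ∀ z ∈ Set.Ioi (0 : ℝ),
      IsChoi (Tz z) ∧ (∀ j, Matrix.trace (C j * Tz z) = (q j : ℂ)) ∧
      ∀ N : Matrix (Fin dB × Fin dR) (Fin dB × Fin dR) ℂ,
        IsChoi N → (∀ j, Matrix.trace (C j * N) = (q j : ℂ)) →
          condEnt (φz z) N ≤ condEnt (φz z) (Tz z))
    -- the optimizers converge as `z → 0⁺`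
    (hTlim : Filter.Tendsto Tz (nhdsWithin 0 (Set.Ioi 0)) (nhds T)) :
    -- then `T` is a feasible Choi matrix maximizing `S_φ` over feasible Choi matrices
    IsChoi T ∧ (∀ j, Matrix.trace (C j * T) = (q j : ℂ)) ∧
    ∀ N : Matrix (Fin dB × Fin dR) (Fin dB × Fin dR) ℂ,
      IsChoi N → (∀ j, Matrix.trace (C j * N) = (q j : ℂ)) →
        condEnt φ N ≤ condEnt φ T := by
  classical
  set l := nhdsWithin (0:ℝ) (Set.Ioi 0) with hl
  have hmem : ∀ᶠ z in l, z ∈ Set.Ioi (0:ℝ) := eventually_mem_nhdsWithin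
  -- T is Hermitian
  have hTherm : T.IsHermitian := by
    have hc : Filter.Tendsto (fun z => (Tz z)ᴴ) l (nhds Tᴴ) :=
      ((continuous_id.matrix_conjTranspose).tendsto T).comp hTlim
    have hev : ∀ᶠ z in l, (Tz z)ᴴ = Tz z := hmem.mono fun z hz => ((hTz z hz).1.1).1
    have hc' : Filter.Tendsto (fun z => (Tz z)ᴴ) l (nhds T) :=
      hTlim.congr' (hev.mono fun z h => h.symm)
    exact tendsto_nhds_unique hc hc'
  -- T is PSD
  have hTpsd : T.PosSemidef := by
    refine Matrix.PosSemidef.of_dotProduct_mulVec_nonneg hTherm fun x => ?_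
    have hcont : Continuous fun M : Matrix (Fin dB × Fin dR) (Fin dB × Fin dR) ℂ =>
        dotProduct (star x) (M *ᵥ x) :=
      continuous_const.dotProduct (continuous_id.matrix_mulVec continuous_const)
    have hquad : Filter.Tendsto (fun z => dotProduct (star x) (Tz z *ᵥ x)) l
        (nhds (dotProduct (star x) (T *ᵥ x))) := (hcont.tendsto T).comp hTlim
    have hev : ∀ᶠ z in l, 0 ≤ dotProduct (star x) (Tz z *ᵥ x) :=
      hmem.mono fun z hz => ((hTz z hz).1.1).dotProduct_mulVec_nonneg x
    rw [Complex.le_def]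
    constructor
    · have hre : Filter.Tendsto (fun z => (dotProduct (star x) (Tz z *ᵥ x)).re) l
          (nhds ((dotProduct (star x) (T *ᵥ x)).re)) :=
        (Complex.continuous_re.tendsto _).comp hquad
      have : ∀ᶠ z in l, (0:ℝ) ≤ (dotProduct (star x) (Tz z *ᵥ x)).re := by
        filter_upwards [hev] with z hz
        simpa using (Complex.le_def.mp hz).1
      simpa using ge_of_tendsto hre this
    · have him : Filter.Tendsto (fun z => (dotProduct (star x) (Tz z *ᵥ x)).im) l
          (nhds ((dotProduct (star x) (T *ᵥ x)).im)) :=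
        (Complex.continuous_im.tendsto _).comp hquad
      have hev' : ∀ᶠ z in l, (dotProduct (star x) (Tz z *ᵥ x)).im = 0 := by
        filter_upwards [hev] with z hz
        simpa using (Complex.le_def.mp hz).2.symm
      have him' : Filter.Tendsto (fun z => (dotProduct (star x) (Tz z *ᵥ x)).im) l
          (nhds 0) := by
        refine Filter.Tendsto.congr' ?_ (tendsto_const_nhds (α := ℝ))
        exact hev'.mono fun z h => h.symm
      simpa using (tendsto_nhds_unique him him').symm
  -- partial trace
  have hTpt : ptraceB T = 1 := by
    have hcont : Continuous (ptraceB (dB := dB) (dR := dR)) := by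
      refine continuous_matrix fun r r' => ?_
      show Continuous fun N : Matrix (Fin dB × Fin dR) (Fin dB × Fin dR) ℂ =>
        ∑ b : Fin dB, N (b, r) (b, r')
      exact continuous_finset_sum _ fun b _ => continuous_id.matrix_elem (b, r) (b, r')
    have hc : Filter.Tendsto (fun z => ptraceB (Tz z)) l (nhds (ptraceB T)) :=
      (hcont.tendsto T).comp hTlim
    have hev : ∀ᶠ z in l, ptraceB (Tz z) = 1 := hmem.mono fun z hz => ((hTz z hz).1).2
    have hc' : Filter.Tendsto (fun z => ptraceB (Tz z)) l (nhds 1) :=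
      Filter.Tendsto.congr' (hev.mono fun z h => h.symm) tendsto_const_nhds
    exact (tendsto_nhds_unique hc hc').symm ▸ rfl
  -- feasibility
  have hTfeas : ∀ j, Matrix.trace (C j * T) = (q j : ℂ) := by
    intro j
    have hcont : Continuous fun M : Matrix (Fin dB × Fin dR) (Fin dB × Fin dR) ℂ =>
        Matrix.trace (C j * M) := (continuous_const.matrix_mul continuous_id).matrix_trace
    have hc : Filter.Tendsto (fun z => Matrix.trace (C j * Tz z)) l
        (nhds (Matrix.trace (C j * T))) := (hcont.tendsto T).comp hTlim
    have hev : ∀ᶠ z in l, Matrix.trace (C j * Tz z) = (q j : ℂ) :=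
      hmem.mono fun z hz => (hTz z hz).2.1 j
    have hc' : Filter.Tendsto (fun z => Matrix.trace (C j * Tz z)) l (nhds ((q j : ℂ))) :=
      Filter.Tendsto.congr' (hev.mono fun z h => h.symm) tendsto_const_nhds
    exact tendsto_nhds_unique hc hc'
  refine ⟨⟨hTpsd, hTpt⟩, hTfeas, ?_⟩
  intro N hN hNfeas
  have hρev : ∀ᶠ z in l, (φz z).PosSemidef := hmem.mono fun z hz => (hφz z hz).1
  have hTev : ∀ᶠ z in l, (Tz z).IsHermitian := hmem.mono fun z hz => ((hTz z hz).1.1).1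
  have hf : Filter.Tendsto (fun z => condEnt (φz z) N) l (nhds (condEnt φ N)) :=
    tendsto_condEnt hρev hφ.1 (Filter.Eventually.of_forall fun _ => hN.1.1) hN.1.1
      hφlim tendsto_const_nhds
  have hg : Filter.Tendsto (fun z => condEnt (φz z) (Tz z)) l (nhds (condEnt φ T)) :=
    tendsto_condEnt hρev hφ.1 hTev hTherm hφlim hTlim
  have hle : ∀ᶠ z in l, condEnt (φz z) N ≤ condEnt (φz z) (Tz z) :=
    hmem.mono fun z hz => (hTz z hz).2.2 N hN hNfeas
  exact le_of_tendsto_of_tendsto hf hg hle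


end ThermalPaper
end
end

section
/- Replacer channels satisfy the optimal-input condition: Let σ be a density matrix on ℂ^{d_A} and γ a density matrix on ℂ^{d_B}. Then log σ − tr₂[ (1_{d_A}⊗γ) · log(σ⊗γ) ] = S(γ) · Π^σ, where σ⊗γ is the Kronecker product, tr₂ denotes the partial trace over the second tensor factor (i.e., (tr₂ M)(a,a') = Σ_b M((a,b),(a',b))), and the left-hand side equals log σ − 𝒩̂†(log 𝒩̂(σ)) for the complementary channel 𝒩̂(X) := X⊗γ (with adjoint 𝒩̂†(Y) = tr₂[(1⊗γ)Y]) of the replacer channel X ↦ tr(X)·γ. In particular the left-hand side is a real scalar multiple of Π^σ. -/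
/-! Statement 10: Replacer channels satisfy the optimal-input condition. -/

noncomputable section
open scoped Kronecker ComplexOrder
open Matrix

namespace ThermalPaper

section Aux

variable {n : Type*} [Fintype n] [DecidableEq n]

open Polynomial

private def conjAlgHom (U : Matrix n n ℂ) (hU : U ∈ Matrix.unitaryGroup n ℂ) :
    Matrix n n ℂ →ₐ[ℝ] Matrix n n ℂ where
  toFun X := U * X * star U
  map_one' := by
    show U * 1 * star U = 1
    rw [mul_one]; exact Matrix.mem_unitaryGroup_iff.mp hU
  map_mul' X Y := by
    have h : star U * U = 1 := Matrix.mem_unitaryGroup_iff'.mp hU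
    calc U * (X * Y) * star U = (U * X) * (star U * U) * (Y * star U) := by
          rw [h, mul_one]; simp only [Matrix.mul_assoc]
      _ = (U * X * star U) * (U * Y * star U) := by simp only [Matrix.mul_assoc]
  map_zero' := by simp
  map_add' X Y := by simp [Matrix.add_mul, Matrix.mul_add]
  commutes' r := by
    have h : U * star U = 1 := Matrix.mem_unitaryGroup_iff.mp hU
    simp [Algebra.algebraMap_eq_smul_one, Matrix.mul_smul, Matrix.smul_mul, h]

private lemma aeval_unitary_conj (p : ℝ[X]) (U D : Matrix n n ℂ)
    (hU : U ∈ Matrix.unitaryGroup n ℂ) :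
    aeval (U * D * star U) p = U * aeval D p * star U :=
  Polynomial.aeval_algHom_apply (conjAlgHom U hU) D p

private lemma aeval_diagonal' (p : ℝ[X]) (d : n → ℝ) :
    aeval (Matrix.diagonal (fun i => (d i : ℂ))) p
      = Matrix.diagonal (fun i => ((p.eval (d i) : ℝ) : ℂ)) := by
  have h1 : aeval ((Matrix.diagonalAlgHom ℝ : (n → ℂ) →ₐ[ℝ] Matrix n n ℂ)
        (fun i => (d i : ℂ))) p
      = Matrix.diagonalAlgHom ℝ (aeval (fun i => (d i : ℂ)) p) :=
    Polynomial.aeval_algHom_apply _ _ p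
  simp only [Matrix.diagonalAlgHom_apply] at h1
  rw [h1]
  have hfn : (aeval (fun i => ((d i : ℂ))) p) = fun i => ((p.eval (d i) : ℝ) : ℂ) := by
    funext i
    have h2 : aeval ((Pi.evalAlgHom ℝ (fun _ : n => ℂ) i) (fun j => ((d j : ℂ)))) p
        = (Pi.evalAlgHom ℝ (fun _ : n => ℂ) i) (aeval (fun j => ((d j : ℂ))) p) :=
      Polynomial.aeval_algHom_apply _ _ p
    simp only [Pi.evalAlgHom_apply] at h2
    rw [← h2]
    have h3 : ((d i : ℂ)) = algebraMap ℝ ℂ (d i) := rfl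
    rw [h3, aeval_algebraMap_apply_eq_algebraMap_eval]
    rfl
  rw [hfn]

private lemma real_diagonal_conjTranspose (d : n → ℝ) :
    (Matrix.diagonal (fun i => (d i : ℂ)))ᴴ = Matrix.diagonal (fun i => (d i : ℂ)) := by
  have h : (star fun i => ((d i : ℂ))) = fun i => ((d i : ℂ)) := by
    funext i
    simp only [Pi.star_apply, Complex.star_def, Complex.conj_ofReal]
  rw [Matrix.diagonal_conjTranspose, h]

private lemma hermCFC_unitary_conj (f : ℝ → ℝ) (U : Matrix n n ℂ)
    (hU : U ∈ Matrix.unitaryGroup n ℂ) (d : n → ℝ) :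
    hermCFC f (U * Matrix.diagonal (fun i => (d i : ℂ)) * star U)
      = U * Matrix.diagonal (fun i => (f (d i) : ℂ)) * star U := by
  classical
  set A := U * Matrix.diagonal (fun i => (d i : ℂ)) * star U with hAdef
  have hA : A.IsHermitian := by
    rw [Matrix.IsHermitian, hAdef, Matrix.star_eq_conjTranspose, Matrix.conjTranspose_mul,
      Matrix.conjTranspose_mul, Matrix.conjTranspose_conjTranspose,
      real_diagonal_conjTranspose, Matrix.mul_assoc]
  set s : Finset ℝ := (Finset.univ.image d) ∪ (Finset.univ.image hA.eigenvalues) with hs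
  have hinj : Set.InjOn id (s : Set ℝ) := Function.injective_id.injOn
  set p : ℝ[X] := Lagrange.interpolate s id f with hp
  have hpd : ∀ i, p.eval (d i) = f (d i) := fun i => by
    have hi : d i ∈ s := by simp [hs]
    exact Lagrange.eval_interpolate_at_node f hinj hi
  have hpe : ∀ i, p.eval (hA.eigenvalues i) = f (hA.eigenvalues i) := fun i => by
    have hi : hA.eigenvalues i ∈ s := by simp [hs]
    exact Lagrange.eval_interpolate_at_node f hinj hi
  have key1 : aeval A p = U * Matrix.diagonal (fun i => (f (d i) : ℂ)) * star U := by
    rw [hAdef, aeval_unitary_conj p _ _ hU, aeval_diagonal']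
    have : (fun i => ((p.eval (d i) : ℝ) : ℂ)) = fun i => ((f (d i) : ℝ) : ℂ) := by
      funext i; rw [hpd]
    rw [this]
  have hspec := hA.spectral_theorem
  have hcomp : (RCLike.ofReal ∘ hA.eigenvalues : n → ℂ)
      = fun i => ((hA.eigenvalues i : ℝ) : ℂ) := rfl
  have key2 : aeval A p = hermCFC f A := by
    conv_lhs => rw [hspec]
    rw [Unitary.conjStarAlgAut_apply, hcomp, aeval_unitary_conj p _ _ (hA.eigenvectorUnitary).2, aeval_diagonal']
    rw [hermCFC, dif_pos hA]
    have : (fun i => ((p.eval (hA.eigenvalues i) : ℝ) : ℂ))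
        = fun i => ((f (hA.eigenvalues i) : ℝ) : ℂ) := by
      funext i; rw [hpe]
    rw [this]
  rw [← key2, key1]

end Aux

variable {dB dR : ℕ}

/-- Partial trace over the second tensor factor. -/
def ptraceSnd {dA dB' : ℕ} (M : Matrix (Fin dA × Fin dB') (Fin dA × Fin dB') ℂ) :
    Matrix (Fin dA) (Fin dA) ℂ :=
  Matrix.of fun a a' => ∑ b : Fin dB', M (a, b) (a', b)


section Aux2

variable {n m : Type*} [Fintype n] [DecidableEq n] [Fintype m] [DecidableEq m]

private lemma kron_conjTranspose (A : Matrix n n ℂ) (B : Matrix m m ℂ) :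
    (A ⊗ₖ B)ᴴ = Aᴴ ⊗ₖ Bᴴ := by
  ext ⟨i, j⟩ ⟨k, l⟩
  simp [Matrix.conjTranspose_apply, Matrix.kroneckerMap_apply, mul_comm]

private lemma kron_mem_unitary (U : Matrix n n ℂ) (V : Matrix m m ℂ)
    (hU : U ∈ Matrix.unitaryGroup n ℂ) (hV : V ∈ Matrix.unitaryGroup m ℂ) :
    U ⊗ₖ V ∈ Matrix.unitaryGroup (n × m) ℂ := by
  rw [Matrix.mem_unitaryGroup_iff]
  rw [Matrix.star_eq_conjTranspose, kron_conjTranspose, ← Matrix.mul_kronecker_mul,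
    ← Matrix.star_eq_conjTranspose (M := U), ← Matrix.star_eq_conjTranspose (M := V),
    Matrix.mem_unitaryGroup_iff.mp hU, Matrix.mem_unitaryGroup_iff.mp hV,
    Matrix.one_kronecker_one]

private lemma conj_mul_conj (U D1 D2 : Matrix n n ℂ) (hU : U ∈ Matrix.unitaryGroup n ℂ) :
    (U * D1 * star U) * (U * D2 * star U) = U * (D1 * D2) * star U :=
  ((conjAlgHom U hU).map_mul D1 D2).symm

private lemma trace_conj (U D : Matrix n n ℂ) (hU : U ∈ Matrix.unitaryGroup n ℂ) :
    (U * D * star U).trace = D.trace := by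
  rw [Matrix.trace_mul_comm, ← Matrix.mul_assoc, Matrix.mem_unitaryGroup_iff'.mp hU,
    Matrix.one_mul]

end Aux2

private lemma ptraceSnd_add {dA dB' : ℕ}
    (M N : Matrix (Fin dA × Fin dB') (Fin dA × Fin dB') ℂ) :
    ptraceSnd (M + N) = ptraceSnd M + ptraceSnd N := by
  ext i j
  simp [ptraceSnd, Finset.sum_add_distrib]

private lemma ptraceSnd_kron {dA dB' : ℕ} (A : Matrix (Fin dA) (Fin dA) ℂ)
    (B : Matrix (Fin dB') (Fin dB') ℂ) :
    ptraceSnd (A ⊗ₖ B) = B.trace • A := by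
  ext i j
  simp only [ptraceSnd, Matrix.of_apply, Matrix.kroneckerMap_apply, Matrix.smul_apply,
    Matrix.trace, Matrix.diag, smul_eq_mul]
  rw [Finset.sum_mul]
  exact Finset.sum_congr rfl fun x _ => mul_comm _ _

/-- **Replacer channels satisfy the optimal-input condition**:
`log σ − tr₂[(1⊗γ)·log(σ⊗γ)] = S(γ)·Π^σ`. -/

theorem replacer_channel_optimal_input_condition
    {dA dB' : ℕ} (hdA : 1 ≤ dA) (hdB : 1 ≤ dB')
    (σ : Matrix (Fin dA) (Fin dA) ℂ) (hσ : IsDensity σ)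
    (γ : Matrix (Fin dB') (Fin dB') ℂ) (hγ : IsDensity γ) :
    matLog σ - ptraceSnd (((1 : Matrix (Fin dA) (Fin dA) ℂ) ⊗ₖ γ) * matLog (σ ⊗ₖ γ))
      = vnEnt γ • suppProj σ := by
  classical
  obtain ⟨hσp, hσtr⟩ := hσ
  obtain ⟨hγp, hγtr⟩ := hγ
  have hσh : σ.IsHermitian := hσp.1
  have hγh : γ.IsHermitian := hγp.1
  set V : Matrix (Fin dA) (Fin dA) ℂ := (hσh.eigenvectorUnitary : Matrix (Fin dA) (Fin dA) ℂ)
    with hV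
  set W : Matrix (Fin dB') (Fin dB') ℂ :=
    (hγh.eigenvectorUnitary : Matrix (Fin dB') (Fin dB') ℂ) with hW
  have hVm : V ∈ Matrix.unitaryGroup (Fin dA) ℂ := hσh.eigenvectorUnitary.2
  have hWm : W ∈ Matrix.unitaryGroup (Fin dB') ℂ := hγh.eigenvectorUnitary.2
  set a : Fin dA → ℝ := hσh.eigenvalues with ha
  set b : Fin dB' → ℝ := hγh.eigenvalues with hb
  have ha0 : ∀ i, 0 ≤ a i := fun i => hσp.eigenvalues_nonneg i
  have hb0 : ∀ j, 0 ≤ b j := fun j => hγp.eigenvalues_nonneg j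
  have hσeq : σ = V * Matrix.diagonal (fun i => ((a i : ℝ) : ℂ)) * star V :=
    hσh.spectral_theorem
  have hγeq : γ = W * Matrix.diagonal (fun j => ((b j : ℝ) : ℂ)) * star W :=
    hγh.spectral_theorem
  set g : ℝ → ℝ := fun x => if x = 0 then 0 else 1 with hg
  -- diagonalizations of the four functional-calculus matrices
  have hlogσ : matLog σ
      = V * Matrix.diagonal (fun i => ((Real.log (a i) : ℝ) : ℂ)) * star V := by
    unfold matLog
    rw [hσeq]
    exact hermCFC_unitary_conj Real.log V hVm a
  have hprσ : suppProj σ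
      = V * Matrix.diagonal (fun i => ((g (a i) : ℝ) : ℂ)) * star V := by
    unfold suppProj
    rw [hσeq]
    exact hermCFC_unitary_conj g V hVm a
  have hlogγ : matLog γ
      = W * Matrix.diagonal (fun j => ((Real.log (b j) : ℝ) : ℂ)) * star W := by
    unfold matLog
    rw [hγeq]
    exact hermCFC_unitary_conj Real.log W hWm b
  have hprγ : suppProj γ
      = W * Matrix.diagonal (fun j => ((g (b j) : ℝ) : ℂ)) * star W := by
    unfold suppProj
    rw [hγeq]
    exact hermCFC_unitary_conj g W hWm b
  have hVWm : V ⊗ₖ W ∈ Matrix.unitaryGroup (Fin dA × Fin dB') ℂ :=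
    kron_mem_unitary V W hVm hWm
  have hstar : star V ⊗ₖ star W = star (V ⊗ₖ W) := by
    rw [Matrix.star_eq_conjTranspose, Matrix.star_eq_conjTranspose,
      Matrix.star_eq_conjTranspose, kron_conjTranspose]
  have hσγ : σ ⊗ₖ γ = (V ⊗ₖ W) *
      Matrix.diagonal (fun q : Fin dA × Fin dB' => ((a q.1 * b q.2 : ℝ) : ℂ)) *
      star (V ⊗ₖ W) := by
    rw [hσeq, hγeq]
    rw [Matrix.mul_kronecker_mul, Matrix.mul_kronecker_mul, Matrix.diagonal_kronecker_diagonal,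
      hstar]
    have hfun : (fun q : Fin dA × Fin dB' => ((a q.1 * b q.2 : ℝ) : ℂ))
        = fun mn : Fin dA × Fin dB' => ((a mn.1 : ℝ) : ℂ) * ((b mn.2 : ℝ) : ℂ) := by
      funext q; push_cast; rfl
    rw [hfun]
  have hlogσγ : matLog (σ ⊗ₖ γ) = (V ⊗ₖ W) *
      Matrix.diagonal
        (fun q : Fin dA × Fin dB' => ((Real.log (a q.1 * b q.2) : ℝ) : ℂ)) *
      star (V ⊗ₖ W) := by
    unfold matLog
    rw [hσγ]
    exact hermCFC_unitary_conj Real.log _ hVWm _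
  have hsplit : ∀ q : Fin dA × Fin dB', Real.log (a q.1 * b q.2)
      = Real.log (a q.1) * g (b q.2) + g (a q.1) * Real.log (b q.2) := by
    intro q
    by_cases h1 : a q.1 = 0
    · simp [hg, h1, Real.log_zero]
    by_cases h2 : b q.2 = 0
    · simp [hg, h2, Real.log_zero]
    · rw [Real.log_mul h1 h2]
      simp [hg, h1, h2]
  have hkey : matLog (σ ⊗ₖ γ) = matLog σ ⊗ₖ suppProj γ + suppProj σ ⊗ₖ matLog γ := by
    rw [hlogσγ, hlogσ, hprγ, hprσ, hlogγ]
    simp only [Matrix.mul_kronecker_mul]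
    rw [Matrix.diagonal_kronecker_diagonal, Matrix.diagonal_kronecker_diagonal, hstar]
    have hfun2 : (fun q : Fin dA × Fin dB' => ((Real.log (a q.1 * b q.2) : ℝ) : ℂ))
        = fun mn : Fin dA × Fin dB' => ((Real.log (a mn.1) : ℝ) : ℂ) * ((g (b mn.2) : ℝ) : ℂ)
          + ((g (a mn.1) : ℝ) : ℂ) * ((Real.log (b mn.2) : ℝ) : ℂ) := by
      funext q
      rw [hsplit q, Complex.ofReal_add, Complex.ofReal_mul, Complex.ofReal_mul]
    rw [hfun2, ← Matrix.diagonal_add, Matrix.mul_add, Matrix.add_mul]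
  have hmul : ((1 : Matrix (Fin dA) (Fin dA) ℂ) ⊗ₖ γ) * matLog (σ ⊗ₖ γ)
      = matLog σ ⊗ₖ (γ * suppProj γ) + suppProj σ ⊗ₖ (γ * matLog γ) := by
    rw [hkey, Matrix.mul_add]
    simp only [← Matrix.mul_kronecker_mul, Matrix.one_mul]
  have hpt : ptraceSnd (((1 : Matrix (Fin dA) (Fin dA) ℂ) ⊗ₖ γ) * matLog (σ ⊗ₖ γ))
      = (γ * suppProj γ).trace • matLog σ + (γ * matLog γ).trace • suppProj σ := by
    rw [hmul, ptraceSnd_add, ptraceSnd_kron, ptraceSnd_kron]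
  have hgp : γ * suppProj γ = γ := by
    rw [hprγ]
    conv_lhs => rw [hγeq]
    rw [conj_mul_conj W _ _ hWm, Matrix.diagonal_mul_diagonal]
    have hfun3 : (fun i => ((b i : ℝ) : ℂ) * ((g (b i) : ℝ) : ℂ))
        = fun j => ((b j : ℝ) : ℂ) := by
      funext j
      by_cases h : b j = 0 <;> simp [hg, h]
    rw [hfun3, ← hγeq]
  have hγlog : γ * matLog γ
      = W * Matrix.diagonal (fun j => ((b j * Real.log (b j) : ℝ) : ℂ)) * star W := by
    rw [hlogγ]
    conv_lhs => rw [hγeq]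
    rw [conj_mul_conj W _ _ hWm, Matrix.diagonal_mul_diagonal]
    have hfun4 : (fun i => ((b i : ℝ) : ℂ) * ((Real.log (b i) : ℝ) : ℂ))
        = fun j => ((b j * Real.log (b j) : ℝ) : ℂ) := by
      funext j; push_cast; rfl
    rw [hfun4]
  have htr : (γ * matLog γ).trace = ((∑ j, b j * Real.log (b j) : ℝ) : ℂ) := by
    rw [hγlog, trace_conj W _ hWm, Matrix.trace_diagonal]
    push_cast
    rfl
  have hvn : vnEnt γ = -(∑ j, b j * Real.log (b j)) := by
    unfold vnEnt
    rw [htr, Complex.ofReal_re]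
  rw [hpt, hgp, hγtr, one_smul, htr, hvn]
  ext i j
  simp only [Matrix.sub_apply, Matrix.add_apply, Matrix.smul_apply, smul_eq_mul,
    Complex.real_smul, Complex.ofReal_neg]
  ring


end ThermalPaper
end
end
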